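/- Let Y be a topological space and let S_1, …, S_m be finitely many pairwise disjoint, locally closed subsets of Y whose union is Y. Then for every nonempty closed irreducible subset C ⊆ Y there exists a unique index i ∈ {1,…,m} such that C = closure(C ∩ S_i). -/
import Mathlib

theorem stmt_8 (Y : Type*) [TopologicalSpace Y] (m : ℕ) (S : Fin m → Set Y)
    (hcover : (⋃ i, S i) = Set.univ)
    (hdisj : ∀ i j, i ≠ j → Disjoint (S i) (S j))
    (hlc : ∀ i, IsLocallyClosed (S i))
    (C : Set Y) (hC : IsClosed C) (hirr : IsIrreducible C) :
    ∃! i : Fin m, C = closure (C ∩ S i) := by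
  classical
  -- Existence: C is covered by the closed sets closure (C ∩ S i)
  have hcov : C ⊆ ⋃₀ ↑(Finset.univ.image (fun i : Fin m => closure (C ∩ S i))) := by
    intro x hx
    have : x ∈ ⋃ i, S i := hcover ▸ Set.mem_univ x
    obtain ⟨i, hi⟩ := Set.mem_iUnion.mp this
    exact ⟨closure (C ∩ S i), Finset.mem_coe.mpr (Finset.mem_image_of_mem _ (Finset.mem_univ i)), subset_closure ⟨hx, hi⟩⟩
  obtain ⟨z, hz, hsub⟩ := isIrreducible_iff_sUnion_isClosed.mp hirr _
    (by intro z hz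
        obtain ⟨i, _, rfl⟩ := Finset.mem_image.mp hz
        exact isClosed_closure) hcov
  simp only [Finset.mem_image, Finset.mem_univ, true_and] at hz
  obtain ⟨i, rfl⟩ := hz
  have hkey : ∀ j, C = closure (C ∩ S j) → C ∩ S j = C ∩ (hlc j).choose := by
    intro j hj
    obtain ⟨hU, hZ, hUZ⟩ := (hlc j).choose_spec.choose_spec
    have hCZ : C ⊆ (hlc j).choose_spec.choose := by
      calc C = closure (C ∩ S j) := hj
        _ ⊆ closure (hlc j).choose_spec.choose :=
            closure_mono (fun x hx => by rw [hUZ] at hx; exact hx.2.2)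
        _ = _ := hZ.closure_eq
    ext x
    constructor
    · rintro ⟨hxC, hxS⟩
      rw [hUZ] at hxS
      exact ⟨hxC, hxS.1⟩
    · rintro ⟨hxC, hxU⟩
      exact ⟨hxC, by rw [hUZ]; exact ⟨hxU, hCZ hxC⟩⟩
  have hEq : C = closure (C ∩ S i) :=
    le_antisymm hsub (hC.closure_subset_iff.mpr Set.inter_subset_left)
  refine ⟨i, hEq, fun j hjj => ?_⟩
  have hj : C = closure (C ∩ S j) := hjj
  by_contra hne
  -- both C ∩ S i and C ∩ S j are nonempty open-in-C dense subsets of C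
  have hni : (C ∩ S i).Nonempty := by
    by_contra h
    rw [Set.not_nonempty_iff_eq_empty] at h
    rw [h, closure_empty] at hEq
    exact hirr.nonempty.ne_empty hEq
  have hnj : (C ∩ S j).Nonempty := by
    by_contra h
    rw [Set.not_nonempty_iff_eq_empty] at h
    rw [h, closure_empty] at hj
    exact hirr.nonempty.ne_empty hj
  have hi' := hkey i hEq
  have hj' := hkey j hj
  obtain ⟨hUi, _, _⟩ := (hlc i).choose_spec.choose_spec
  obtain ⟨hUj, _, _⟩ := (hlc j).choose_spec.choose_spec
  obtain ⟨x, hxC, hxi, hxj⟩ := hirr.2 _ _ hUi hUj (hi' ▸ hni) (hj' ▸ hnj)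
  have h1 : x ∈ C ∩ S i := hi' ▸ (⟨hxC, hxi⟩ : x ∈ C ∩ _)
  have h2 : x ∈ C ∩ S j := hj' ▸ (⟨hxC, hxj⟩ : x ∈ C ∩ _)
  exact (hdisj j i hne).ne_of_mem h2.2 h1.2 rfl
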